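/- Let G_ω be a weighted graph with goal vertex x, and let p be a pebble distribution of maximum size among all pebble distributions from which x is not reachable (such a maximum exists since G is connected). Then p(u) = 0 for every vertex u that is an inner vertex of a cut ear of G with respect to x. -/

import Mathlib

open Finset

variable {V : Type*}

/-- Applying the pebbling move `m = (v, u)` on `G_ω`: remove `ω v u` pebbles at `v`
and add one pebble at `u`. -/
def moveFn [DecidableEq V] (ω : V → V → ℕ) (m : V × V) (p : V → ℤ) : V → ℤ :=
  fun w => if w = m.1 then p m.1 - ω m.1 m.2 else if w = m.2 then p m.2 + 1 else p w

/-- The pebble function obtained after applying a sequence of pebbling moves. -/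
def applyList [DecidableEq V] (ω : V → V → ℕ) : List (V × V) → (V → ℤ) → (V → ℤ)
  | [], p => p
  | m :: l, p => applyList ω l (moveFn ω m p)

/-- A pebbling sequence is executable from `p` if every move is along an edge of `G`
and every intermediate pebble function is nonnegative. -/
def Executable [DecidableEq V] (G : SimpleGraph V) (ω : V → V → ℕ) :
    (V → ℤ) → List (V × V) → Prop
  | _, [] => True
  | p, m :: l => G.Adj m.1 m.2 ∧ (∀ w, 0 ≤ moveFn ω m p w) ∧ Executable G ω (moveFn ω m p) l

/-- `x` is `t`-reachable from `p` on the weighted graph `G_ω`. -/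
def Reaches [DecidableEq V] (G : SimpleGraph V) (ω : V → V → ℕ) (p : V → ℤ) (x : V)
    (t : ℕ) : Prop :=
  ∃ l : List (V × V), Executable G ω p l ∧ (t : ℤ) ≤ applyList ω l p x

/-- A pebble distribution is a nonnegative pebble function. -/
def IsDistrib (p : V → ℤ) : Prop := ∀ v, 0 ≤ p v

/-- The size of a pebble distribution: the total number of pebbles. -/
def size [Fintype V] (p : V → ℤ) : ℤ := ∑ v, p v

/-- The `t`-pebbling number `π_t(G_ω, x)`: the least `m` such that `x` is `t`-reachable
from every pebble distribution of size `m`. -/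
noncomputable def piT [Fintype V] [DecidableEq V] (G : SimpleGraph V) (ω : V → V → ℕ)
    (x : V) (t : ℕ) : ℕ :=
  sInf {m : ℕ | ∀ p : V → ℤ, IsDistrib p → size p = (m : ℤ) → Reaches G ω p x t}

/-- `p_S` for a multiset `S` of pebbling moves:
`p_S(w) = p(w) + d⁻(w) − ∑ ω(w,u)` over arcs leaving `w`. -/
def applyMS [DecidableEq V] (ω : V → V → ℕ) (S : Multiset (V × V)) (p : V → ℤ) : V → ℤ :=
  fun w => p w + (Multiset.card (S.filter (fun m => m.2 = w)) : ℤ)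
    - ((S.filter (fun m => m.1 = w)).map (fun m => (ω m.1 m.2 : ℤ))).sum

/-- The transition digraph of `S` contains a directed cycle. -/
def HasCycle (S : Multiset (V × V)) : Prop :=
  ∃ l : List (V × V), l ≠ [] ∧ (l : Multiset (V × V)) ≤ S ∧
    List.Chain' (fun a b => a.2 = b.1) l ∧
    l.getLast?.map Prod.snd = l.head?.map Prod.fst

/-- A multiset of pebbling moves is acyclic if its transition digraph has no directed cycle. -/
def Acyclic (S : Multiset (V × V)) : Prop := ¬HasCycle S

/-- A list of pebbling moves is regular if each move is an initial move of the multiset of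
remaining moves: the source of each move has in-degree zero among the remaining moves. -/
def RegularSeq : List (V × V) → Prop
  | [] => True
  | m :: l => (∀ m' ∈ m :: l, m'.2 ≠ m.1) ∧ RegularSeq l

/-- `v` is a cut vertex of the (connected) graph `G`: deleting `v` disconnects `G`. -/
def IsCutVertex {V : Type*} (G : SimpleGraph V) (v : V) : Prop :=
  ¬(G.induce {w : V | w ≠ v}).Connected

/-! A pebble on a degree-two cut vertex `v` can be traded for `ω c v ≥ 2` pebbles on the
neighbour `c` whose side of `G - v` misses `x`; by maximality the enlarged distribution solves
`x`. A solution is analysed through the multiset of its moves, since every multiset of moves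
with a nonnegative outcome is realised by an executable sequence (cancel cycles, then play
initial moves). If the solution uses the move `(c, v)`, removing it leaves a solution from `p`;
otherwise no move enters `v` from `c`'s side, the moves made on that side can be discarded, and
the rest solves `x` from `p`. -/

section MoveMultisets

variable [DecidableEq V] (ω : V → V → ℕ)

lemma applyMS_eq_add (S : Multiset (V × V)) (p : V → ℤ) :
    applyMS ω S p = p + applyMS ω S 0 := by
  funext u
  simp only [applyMS, Pi.add_apply, Pi.zero_apply]
  ring

lemma applyMS_apply_le_apply (S : Multiset (V × V)) {p q : V → ℤ} {u : V} (h : p u ≤ q u) :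
    applyMS ω S p u ≤ applyMS ω S q u := by
  rw [applyMS_eq_add ω S p, applyMS_eq_add ω S q]
  simpa using h

lemma applyMS_zero (p : V → ℤ) : applyMS ω 0 p = p := by
  funext u
  simp [applyMS]

lemma applyMS_add (S T : Multiset (V × V)) (p : V → ℤ) :
    applyMS ω (S + T) p = applyMS ω T (applyMS ω S p) := by
  funext u
  simp only [applyMS, Multiset.filter_add, Multiset.card_add, Multiset.map_add,
    Multiset.sum_add]
  push_cast
  ring

lemma applyMS_singleton {m : V × V} (hm : m.1 ≠ m.2) (p : V → ℤ) :
    applyMS ω {m} p = moveFn ω m p := by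
  funext u
  by_cases h1 : u = m.1
  · subst h1
    simp [applyMS, moveFn, Multiset.filter_singleton, Ne.symm hm]
  · by_cases h2 : u = m.2
    · subst h2
      simp [applyMS, moveFn, Multiset.filter_singleton, hm, Ne.symm hm]
    · simp [applyMS, moveFn, Multiset.filter_singleton, h1, h2, Ne.symm h1, Ne.symm h2]

lemma applyMS_cons {m : V × V} (hm : m.1 ≠ m.2) (S : Multiset (V × V)) (p : V → ℤ) :
    applyMS ω (m ::ₘ S) p = applyMS ω S (moveFn ω m p) := by
  rw [← Multiset.singleton_add, applyMS_add, applyMS_singleton ω hm]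

lemma applyList_eq_applyMS {l : List (V × V)} (hl : ∀ m ∈ l, m.1 ≠ m.2) (p : V → ℤ) :
    applyList ω l p = applyMS ω l p := by
  induction l generalizing p with
  | nil => exact (applyMS_zero ω p).symm
  | cons m l ih =>
    rw [List.forall_mem_cons] at hl
    rw [← Multiset.cons_coe, applyMS_cons ω hl.1, ← ih hl.2]
    rfl

lemma applyMS_le_of_forall_ne {S : Multiset (V × V)} {u : V} (hu : ∀ m ∈ S, m.2 ≠ u)
    (p : V → ℤ) : applyMS ω S p u ≤ p u := by
  have : S.filter (fun m => m.2 = u) = 0 := Multiset.filter_eq_nil.mpr hu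
  simp only [applyMS, this, Multiset.card_zero, Nat.cast_zero, add_zero, sub_le_self_iff]
  exact Multiset.sum_nonneg fun _ h => by
    obtain ⟨_, _, rfl⟩ := Multiset.mem_map.mp h
    positivity

end MoveMultisets

section Cycles

lemma coe_le_of_nodup {α : Type*} {S : Multiset α} {l : List α} (hnd : l.Nodup)
    (hS : ∀ m ∈ l, m ∈ S) : (l : Multiset α) ≤ S :=
  (Multiset.le_iff_subset (Multiset.coe_nodup.mpr hnd)).mpr hS

lemma map_snd_of_isChain :
    ∀ {a : V × V} {l : List (V × V)}, (a :: l).IsChain (fun m m' => m.2 = m'.1) →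
      (a :: l).map Prod.snd = l.map Prod.fst ++ [((a :: l).getLast (List.cons_ne_nil a l)).2]
  | _, [], _ => rfl
  | a, b :: l, h => by
    rw [List.isChain_cons_cons] at h
    rw [List.map_cons, map_snd_of_isChain h.2, h.1, List.getLast_cons_cons]
    rfl

lemma map_snd_perm_map_fst_of_isChain {a : V × V} {l : List (V × V)}
    (hch : (a :: l).IsChain (fun m m' => m.2 = m'.1))
    (hcl : (a :: l).getLast?.map Prod.snd = some a.1) :
    ((a :: l).map Prod.snd).Perm ((a :: l).map Prod.fst) := by
  rw [List.getLast?_eq_some_getLast (List.cons_ne_nil a l), Option.map_some,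
    Option.some_inj] at hcl
  rw [map_snd_of_isChain hch, hcl, List.map_cons]
  exact List.perm_append_singleton _ _

variable [DecidableEq V]

/-- Along a closed chain every vertex receives as many pebbles as moves leave it, and each of
those moves costs at least one pebble. -/
lemma applyMS_le_self_of_isChain (ω : V → V → ℕ) {a : V × V}
    {l : List (V × V)} (hch : (a :: l).IsChain (fun m m' => m.2 = m'.1))
    (hcl : (a :: l).getLast?.map Prod.snd = some a.1) (hω : ∀ m ∈ a :: l, 1 ≤ ω m.1 m.2)
    (p : V → ℤ) : applyMS ω ↑(a :: l) p ≤ p := by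
  intro u
  have hcard : Multiset.card ((↑(a :: l) : Multiset (V × V)).filter (fun m => m.2 = u))
      = Multiset.card ((↑(a :: l) : Multiset (V × V)).filter (fun m => m.1 = u)) := by
    simp_rw [eq_comm (b := u), ← Multiset.count_map, Multiset.map_coe,
      (Multiset.coe_eq_coe.mpr (map_snd_perm_map_fst_of_isChain hch hcl))]
  have hsum := Multiset.card_nsmul_le_sum (a := (1 : ℤ))
    (s := ((↑(a :: l) : Multiset (V × V)).filter (fun m => m.1 = u)).map
      (fun m => (ω m.1 m.2 : ℤ))) (by
        simp only [Multiset.mem_map, Multiset.mem_filter, Multiset.mem_coe]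
        rintro _ ⟨m, ⟨hm, -⟩, rfl⟩
        exact_mod_cast hω m hm)
  simp only [Multiset.card_map, nsmul_eq_mul, mul_one] at hsum
  simp only [applyMS, hcard]
  linarith

/-- If every move of `S` has a predecessor in `S`, a chain of distinct moves of `S` can be
extended backwards until it meets itself, closing a cycle. -/
lemma hasCycle_of_isChain {S : Multiset (V × V)} (H : ∀ m ∈ S, ∃ m' ∈ S, m'.2 = m.1)
    (a : V × V) (l : List (V × V)) (hnd : (a :: l).Nodup) (hS : ∀ m ∈ a :: l, m ∈ S)
    (hch : (a :: l).IsChain (fun m m' => m.2 = m'.1)) : HasCycle S := by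
  obtain ⟨m', hm'S, hm'a⟩ := H a (hS a List.mem_cons_self)
  by_cases hm' : m' ∈ a :: l
  · obtain ⟨l₁, l₂, heq⟩ := List.append_of_mem hm'
    have hpre : l₁ ++ [m'] <+: a :: l := ⟨l₂, by simp [heq]⟩
    have hne : l₁ ++ [m'] ≠ [] := by simp
    refine ⟨l₁ ++ [m'], hne, coe_le_of_nodup (hnd.sublist hpre.sublist)
      (fun m hm => hS m (hpre.subset hm)), hch.prefix hpre, ?_⟩
    rw [List.getLast?_concat, List.head?_eq_some_head hne, hpre.head hne]
    simp [hm'a]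
  · have hlt : (a :: l).length < Multiset.card S := by
      have := Multiset.card_le_card (coe_le_of_nodup (List.nodup_cons.mpr ⟨hm', hnd⟩)
        (List.forall_mem_cons.mpr ⟨hm'S, hS⟩))
      simp only [Multiset.coe_card, List.length_cons] at this ⊢
      omega
    exact hasCycle_of_isChain H m' (a :: l) (List.nodup_cons.mpr ⟨hm', hnd⟩)
      (List.forall_mem_cons.mpr ⟨hm'S, hS⟩) (List.isChain_cons_cons.mpr ⟨hm'a, hch⟩)
termination_by Multiset.card S - l.length
decreasing_by simp only [List.length_cons] at hlt ⊢; omega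

lemma exists_initial_of_not_hasCycle {S : Multiset (V × V)} (hS : S ≠ 0) (hc : ¬HasCycle S) :
    ∃ m ∈ S, ∀ m' ∈ S, m'.2 ≠ m.1 := by
  by_contra! H
  obtain ⟨m, hm⟩ := Multiset.exists_mem_of_ne_zero hS
  exact hc (hasCycle_of_isChain H m [] (List.nodup_singleton m) (by simpa using hm)
    (List.isChain_singleton m))

end Cycles

section Realization

variable [DecidableEq V] (G : SimpleGraph V) (ω : V → V → ℕ)

lemma Executable.adj {p : V → ℤ} {l : List (V × V)} (h : Executable G ω p l) :
    ∀ m ∈ l, G.Adj m.1 m.2 := by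
  induction l generalizing p with
  | nil => simp
  | cons m l ih => exact List.forall_mem_cons.mpr ⟨h.1, ih h.2.2⟩

lemma Executable.isDistrib_applyList {p : V → ℤ} {l : List (V × V)} (h : Executable G ω p l)
    (hp : IsDistrib p) : IsDistrib (applyList ω l p) := by
  induction l generalizing p with
  | nil => exact hp
  | cons m l ih => exact ih h.2.2 h.2.1

lemma exists_executable_applyMS_le (hω : ∀ u v, G.Adj u v → 1 ≤ ω u v)
    (S : Multiset (V × V)) (hS : ∀ m ∈ S, G.Adj m.1 m.2) (p : V → ℤ) (hp : IsDistrib p)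
    (hpS : IsDistrib (applyMS ω S p)) :
    ∃ l, Executable G ω p l ∧ applyMS ω S p ≤ applyList ω l p := by
  induction hn : Multiset.card S using Nat.strong_induction_on generalizing S p with
  | _ n ih =>
  by_cases hcyc : HasCycle S
  · obtain ⟨C, hC, hCS, hch, hcl⟩ := hcyc
    obtain ⟨a, l, rfl⟩ := List.exists_cons_of_ne_nil hC
    obtain ⟨T, rfl⟩ := Multiset.le_iff_exists_add.mp hCS
    have hle : applyMS ω (↑(a :: l) + T) p ≤ applyMS ω T p := by
      rw [applyMS_add]
      exact fun u => applyMS_apply_le_apply ω T (applyMS_le_self_of_isChain ω hch hcl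
        (fun m hm => hω _ _ (hS m (Multiset.mem_add.mpr (Or.inl hm)))) p u)
    obtain ⟨l', hl', hge⟩ := ih (Multiset.card T) (by simp [← hn]) T
      (fun m hm => hS m (Multiset.mem_add.mpr (Or.inr hm))) p hp
      (fun u => (hpS u).trans (hle u)) rfl
    exact ⟨l', hl', hle.trans hge⟩
  rcases eq_or_ne S 0 with rfl | hS0
  · exact ⟨[], trivial, (applyMS_zero ω p).le⟩
  obtain ⟨m, hmS, hinit⟩ := exists_initial_of_not_hasCycle hS0 hcyc
  obtain ⟨T, rfl⟩ := Multiset.exists_cons_of_mem hmS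
  have hadj : G.Adj m.1 m.2 := hS m (Multiset.mem_cons_self m T)
  rw [applyMS_cons ω hadj.ne] at hpS ⊢
  have hmove : IsDistrib (moveFn ω m p) := by
    intro u
    by_cases hu : u = m.1
    · subst hu
      exact (hpS m.1).trans (applyMS_le_of_forall_ne ω
        (fun m' hm' => hinit m' (Multiset.mem_cons_of_mem hm')) _)
    · have := hp u
      have := hp m.2
      simp only [moveFn, if_neg hu]
      split_ifs <;> omega
  obtain ⟨l, hl, hge⟩ := ih (Multiset.card T) (by simp [← hn]) T
    (fun m' hm' => hS m' (Multiset.mem_cons_of_mem hm')) _ hmove hpS rfl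
  exact ⟨m :: l, ⟨hadj, hmove, hl⟩, hge⟩

lemma reaches_of_applyMS (hω : ∀ u v, G.Adj u v → 1 ≤ ω u v) {S : Multiset (V × V)}
    (hS : ∀ m ∈ S, G.Adj m.1 m.2) {p : V → ℤ} (hp : IsDistrib p)
    (hpS : IsDistrib (applyMS ω S p)) {x : V} {t : ℕ} (ht : (t : ℤ) ≤ applyMS ω S p x) :
    Reaches G ω p x t :=
  have ⟨l, hl, hge⟩ := exists_executable_applyMS_le G ω hω S hS p hp hpS
  ⟨l, hl, ht.trans (hge x)⟩

end Realization

section Restriction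

variable [DecidableEq V] (ω : V → V → ℕ) (A : Set V) [DecidablePred (· ∈ A)]
  {S : Multiset (V × V)}

lemma applyMS_filter_apply_of_not_mem (hA : ∀ m ∈ S, m.1 ∈ A → m.2 ∈ A) (p : V → ℤ) {u : V}
    (hu : u ∉ A) : applyMS ω (S.filter (fun m => m.1 ∉ A)) p u = applyMS ω S p u := by
  have hin : (S.filter (fun m => m.1 ∉ A)).filter (fun m => m.2 = u) = S.filter (·.2 = u) := by
    rw [Multiset.filter_filter]
    exact Multiset.filter_congr fun m hm =>
      ⟨And.left, fun h => ⟨h, fun h1 => hu (h ▸ hA m hm h1)⟩⟩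
  have hout : (S.filter (fun m => m.1 ∉ A)).filter (fun m => m.1 = u) = S.filter (·.1 = u) := by
    rw [Multiset.filter_filter]
    exact Multiset.filter_congr fun m _ => ⟨And.left, fun h => ⟨h, h ▸ hu⟩⟩
  simp only [applyMS, hin, hout]

lemma le_applyMS_filter_apply_of_mem (p : V → ℤ) {u : V} (hu : u ∈ A) :
    p u ≤ applyMS ω (S.filter (fun m => m.1 ∉ A)) p u := by
  have hout : (S.filter (fun m => m.1 ∉ A)).filter (fun m => m.1 = u) = 0 := by
    rw [Multiset.filter_filter, Multiset.filter_eq_nil]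
    rintro m - ⟨rfl, h⟩
    exact h hu
  simp only [applyMS, hout, Multiset.map_zero, Multiset.sum_zero, sub_zero,
    le_add_iff_nonneg_right, Nat.cast_nonneg]

end Restriction

lemma reaches_of_applyMS_of_closed [DecidableEq V] (G : SimpleGraph V) (ω : V → V → ℕ)
    (hω : ∀ u v, G.Adj u v → 1 ≤ ω u v) (A : Set V) {S : Multiset (V × V)}
    (hS : ∀ m ∈ S, G.Adj m.1 m.2) (hA : ∀ m ∈ S, m.1 ∈ A → m.2 ∈ A) {p : V → ℤ}
    (hp : IsDistrib p) (hpS : ∀ u ∉ A, 0 ≤ applyMS ω S p u) {x : V} (hx : x ∉ A) {t : ℕ}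
    (ht : (t : ℤ) ≤ applyMS ω S p x) : Reaches G ω p x t := by
  classical
  refine reaches_of_applyMS G ω hω (S := S.filter (fun m => m.1 ∉ A))
    (fun m hm => hS m (Multiset.mem_of_mem_filter hm)) hp (fun u => ?_) ?_
  · by_cases hu : u ∈ A
    · exact (hp u).trans (le_applyMS_filter_apply_of_mem ω A p hu)
    · exact applyMS_filter_apply_of_not_mem ω A hA p hu ▸ hpS u hu
  · exact applyMS_filter_apply_of_not_mem ω A hA p hx ▸ ht

def IsOnlyEdgeOut (G : SimpleGraph V) (A : Set V) (c v : V) : Prop :=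
  ∀ s ∈ A, ∀ t, G.Adj s t → t ∉ A → s = c ∧ t = v

lemma reaches_of_applyMS_trade [DecidableEq V] {G : SimpleGraph V} {ω : V → V → ℕ}
    (hω : ∀ u v, G.Adj u v → 1 ≤ ω u v) {c v : V} {A : Set V} (hcv : G.Adj c v) (hcA : c ∈ A)
    (hA : IsOnlyEdgeOut G A c v) {S : Multiset (V × V)} (hS : ∀ m ∈ S, G.Adj m.1 m.2)
    {p : V → ℤ} (hp : IsDistrib p)
    (hpS : IsDistrib (applyMS ω S (p + Pi.single c (ω c v : ℤ) - Pi.single v 1))) {x : V}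
    (hxA : x ∉ A) {t : ℕ}
    (ht : (t : ℤ) ≤ applyMS ω S (p + Pi.single c (ω c v : ℤ) - Pi.single v 1) x) :
    Reaches G ω p x t := by
  set q := p + Pi.single c (ω c v : ℤ) - Pi.single v 1 with hq
  by_cases hcvS : (c, v) ∈ S
  · have hmove : moveFn ω (c, v) q = p := by
      funext u
      by_cases h1 : u = c
      · subst h1; simp [moveFn, hq, hcv.ne]
      · by_cases h2 : u = v
        · subst h2; simp [moveFn, hq, h1]
        · simp [moveFn, hq, h1, h2]
    obtain ⟨T, rfl⟩ := Multiset.exists_cons_of_mem hcvS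
    rw [applyMS_cons ω hcv.ne, hmove] at hpS ht
    exact reaches_of_applyMS G ω hω (fun m hm => hS m (Multiset.mem_cons_of_mem hm)) hp hpS ht
  · have hle : ∀ u ∉ A, applyMS ω S q u ≤ applyMS ω S p u := fun u hu =>
      applyMS_apply_le_apply ω _ (by
        simp only [hq, Pi.sub_apply, Pi.add_apply, Pi.single_apply,
          if_neg (ne_of_mem_of_not_mem hcA hu).symm]
        split_ifs <;> omega)
    have hclosed : ∀ m ∈ S, m.1 ∈ A → m.2 ∈ A := by
      intro m hm hm1
      by_contra hm2
      obtain ⟨h1, h2⟩ := hA m.1 hm1 m.2 (hS m hm) hm2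
      rw [show m = (c, v) from Prod.ext_iff.mpr ⟨h1, h2⟩] at hm
      exact hcvS hm
    exact reaches_of_applyMS_of_closed G ω hω A hS hclosed hp
      (fun u hu => (hpS u).trans (hle u hu)) hxA (ht.trans (hle x hxA))

theorem eq_zero_of_isOnlyEdgeOut [Fintype V] [DecidableEq V] (G : SimpleGraph V)
    (ω : V → V → ℕ) (hω : ∀ u v, G.Adj u v → 2 ≤ ω u v) {x : V} {p : V → ℤ}
    (hp : IsDistrib p) (hnr : ¬Reaches G ω p x 1)
    (hmax : ∀ q : V → ℤ, IsDistrib q → ¬Reaches G ω q x 1 → size q ≤ size p)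
    {c v : V} {A : Set V} (hcv : G.Adj c v) (hcA : c ∈ A) (hxA : x ∉ A)
    (hA : IsOnlyEdgeOut G A c v) : p v = 0 := by
  by_contra hv
  set q := p + Pi.single c (ω c v : ℤ) - Pi.single v 1 with hq
  have hq0 : IsDistrib q := fun u => by
    by_cases huv : u = v
    · subst huv; have := hp u; simp [hq, hcv.ne']; omega
    · have := hp u
      simp only [hq, Pi.sub_apply, Pi.add_apply, Pi.single_apply, if_neg huv]
      split_ifs <;> omega
  have hsize : size p < size q := by
    have := hω c v hcv
    simp only [size, hq, Pi.sub_apply, Pi.add_apply, Finset.sum_sub_distrib,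
      Finset.sum_add_distrib, Finset.sum_pi_single', Finset.mem_univ, if_true]
    omega
  obtain ⟨l, hl, hlx⟩ : Reaches G ω q x 1 := by
    by_contra h
    exact (hmax q hq0 h).not_gt hsize
  have hS : ∀ m ∈ (l : Multiset (V × V)), G.Adj m.1 m.2 := hl.adj G ω
  have hlS := applyList_eq_applyMS ω (fun m hm => (hS m hm).ne) q
  rw [hlS] at hlx
  exact hnr (reaches_of_applyMS_trade (fun u v h => one_le_two.trans (hω u v h)) hcv hcA hA
    hS hp (hlS ▸ hl.isDistrib_applyList G ω hq0) hxA hlx)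

section CutVertex

variable {G : SimpleGraph V} {v a b : V}

lemma reachable_or_reachable_neighbor_of_walk (hnb : G.neighborSet v = {a, b}) (ha : a ≠ v)
    (hb : b ≠ v) {u u' : V} (W : G.Walk u u') (hu : u ≠ v) (hu' : u' ≠ v) :
    (G.induce {y | y ≠ v}).Reachable ⟨u, hu⟩ ⟨u', hu'⟩ ∨
      (G.induce {y | y ≠ v}).Reachable ⟨u, hu⟩ ⟨a, ha⟩ ∨
      (G.induce {y | y ≠ v}).Reachable ⟨u, hu⟩ ⟨b, hb⟩ := by
  induction W with
  | nil => exact Or.inl .rfl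
  | @cons u w _ huw W ih =>
    by_cases hw : w = v
    · subst hw
      have : u ∈ G.neighborSet w := huw.symm
      rw [hnb] at this
      rcases this with rfl | rfl
      · exact Or.inr (Or.inl .rfl)
      · exact Or.inr (Or.inr .rfl)
    · have hstep : (G.induce {y | y ≠ v}).Adj ⟨u, hu⟩ ⟨w, hw⟩ := huw
      rcases ih hw hu' with h | h | h
      · exact Or.inl (hstep.reachable.trans h)
      · exact Or.inr (Or.inl (hstep.reachable.trans h))
      · exact Or.inr (Or.inr (hstep.reachable.trans h))

/-- Every vertex of `G - v` is joined to a neighbour of `v`, so if the two neighbours were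
joined, `G - v` would be connected. -/
lemma not_reachable_of_isCutVertex (hG : G.Connected) (hnb : G.neighborSet v = {a, b})
    (hcut : IsCutVertex G v) (ha : a ≠ v) (hb : b ≠ v) :
    ¬(G.induce {y | y ≠ v}).Reachable ⟨a, ha⟩ ⟨b, hb⟩ := by
  intro hab
  have hreach : ∀ y : {y | y ≠ v}, (G.induce {y | y ≠ v}).Reachable y ⟨a, ha⟩ := by
    rintro ⟨y, hy⟩
    obtain ⟨W⟩ := hG.preconnected y a
    rcases reachable_or_reachable_neighbor_of_walk hnb ha hb W hy ha with h | h | h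
    · exact h
    · exact h
    · exact h.trans hab.symm
  have : Nonempty {y | y ≠ v} := ⟨⟨a, ha⟩⟩
  exact hcut ⟨fun y z => (hreach y).trans (hreach z).symm⟩

lemma exists_isOnlyEdgeOut_of_not_reachable (hnb : G.neighborSet v = {a, b}) (ha : a ≠ v)
    (hb : b ≠ v) {x : V} (hxv : x ≠ v)
    (hab : ¬(G.induce {y | y ≠ v}).Reachable ⟨a, ha⟩ ⟨b, hb⟩)
    (hax : ¬(G.induce {y | y ≠ v}).Reachable ⟨a, ha⟩ ⟨x, hxv⟩) :
    ∃ A : Set V, a ∈ A ∧ x ∉ A ∧ IsOnlyEdgeOut G A a v := by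
  refine ⟨{y | ∃ hy : y ≠ v, (G.induce {y | y ≠ v}).Reachable ⟨a, ha⟩ ⟨y, hy⟩},
    ⟨ha, .rfl⟩, fun ⟨_, h⟩ => hax h, ?_⟩
  rintro s ⟨hs, has⟩ t hst htA
  by_cases htv : t = v
  · subst htv
    have : s ∈ G.neighborSet t := hst.symm
    rw [hnb] at this
    rcases this with rfl | rfl
    · exact ⟨rfl, rfl⟩
    · exact absurd has hab
  · exact absurd ⟨htv, has.trans (show (G.induce {y | y ≠ v}).Adj ⟨s, hs⟩ ⟨t, htv⟩ from
      hst).reachable⟩ htA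

lemma exists_isOnlyEdgeOut_of_isCutVertex (hG : G.Connected) (hnb : G.neighborSet v = {a, b})
    (hcut : IsCutVertex G v) {x : V} (hxv : x ≠ v) :
    ∃ c, ∃ A : Set V, G.Adj c v ∧ c ∈ A ∧ x ∉ A ∧ IsOnlyEdgeOut G A c v := by
  have hva : G.Adj v a := by simp [← G.mem_neighborSet, hnb]
  have hvb : G.Adj v b := by simp [← G.mem_neighborSet, hnb]
  have hab := not_reachable_of_isCutVertex hG hnb hcut hva.ne' hvb.ne'
  by_cases hax : (G.induce {y | y ≠ v}).Reachable ⟨a, hva.ne'⟩ ⟨x, hxv⟩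
  · obtain ⟨A, hA⟩ := exists_isOnlyEdgeOut_of_not_reachable (Set.pair_comm a b ▸ hnb)
      hvb.ne' hva.ne' hxv (fun h => hab h.symm) (fun h => hab (hax.trans h.symm))
    exact ⟨b, A, hvb.symm, hA⟩
  · obtain ⟨A, hA⟩ := exists_isOnlyEdgeOut_of_not_reachable hnb hva.ne' hvb.ne' hxv hab hax
    exact ⟨a, A, hva.symm, hA⟩

end CutVertex

theorem statement10_general {V : Type*} [Fintype V] [DecidableEq V]
    (G : SimpleGraph V) (hG : G.Connected)
    (ω : V → V → ℕ)
    (hω : ∀ u v : V, G.Adj u v → 2 ≤ ω u v)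
    (x : V) (p : V → ℤ) (hp : IsDistrib p) (hnr : ¬Reaches G ω p x 1)
    (hmaxsize : ∀ q : V → ℤ, IsDistrib q → ¬Reaches G ω q x 1 → size q ≤ size p)
    (k : ℕ) (w : Fin (k + 2) → V)
    (hnotx : ∀ i : Fin (k + 2), i ≠ 0 → i ≠ Fin.last (k + 1) → w i ≠ x)
    (hdeg : ∀ i : Fin (k + 2), i ≠ 0 → i ≠ Fin.last (k + 1) →
      G.neighborSet (w i) = {w (i - 1), w (i + 1)})
    (hcut : ∀ i : Fin (k + 2), i ≠ 0 → i ≠ Fin.last (k + 1) → IsCutVertex G (w i)) :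
    ∀ i : Fin (k + 2), i ≠ 0 → i ≠ Fin.last (k + 1) → p (w i) = 0 := by
  intro i hi0 hil
  obtain ⟨c, A, hcv, hcA, hxA, hA⟩ := exists_isOnlyEdgeOut_of_isCutVertex hG
    (hdeg i hi0 hil) (hcut i hi0 hil) (hnotx i hi0 hil).symm
  exact eq_zero_of_isOnlyEdgeOut G ω hω hp hnr hmaxsize hcv hcA hxA hA

/-- Let `p` be a pebble distribution of maximum size among all
distributions from which the goal vertex `x` is not reachable. Then `p` has no pebbles
on the inner vertices of any cut ear: here the cut ear is given by consecutive vertices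
`w 0, w 1, …, w (k+1)` with inner vertices `w 1, …, w k`, which have degree `2`, are
different from `x`, are cut vertices of `G`, and the thread is maximal. -/
theorem statement10 {V : Type*} [Fintype V] [DecidableEq V]
    (G : SimpleGraph V) (hG : G.Connected)
    (ω : V → V → ℕ) (hsym : ∀ u v : V, ω u v = ω v u)
    (hω : ∀ u v : V, G.Adj u v → 2 ≤ ω u v)
    (x : V) (p : V → ℤ) (hp : IsDistrib p) (hnr : ¬Reaches G ω p x 1)
    (hmaxsize : ∀ q : V → ℤ, IsDistrib q → ¬Reaches G ω q x 1 → size q ≤ size p)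
    (k : ℕ) (hk : 1 ≤ k) (w : Fin (k + 2) → V) (hinj : Function.Injective w)
    (hadj : ∀ i : Fin (k + 1), G.Adj (w i.castSucc) (w i.succ))
    (hnotx : ∀ i : Fin (k + 2), i ≠ 0 → i ≠ Fin.last (k + 1) → w i ≠ x)
    (hdeg : ∀ i : Fin (k + 2), i ≠ 0 → i ≠ Fin.last (k + 1) →
      G.neighborSet (w i) = {w (i - 1), w (i + 1)})
    (hcut : ∀ i : Fin (k + 2), i ≠ 0 → i ≠ Fin.last (k + 1) → IsCutVertex G (w i))
    (hmax0 : w 0 = x ∨ ¬∃ a b : V, a ≠ b ∧ G.neighborSet (w 0) = {a, b})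
    (hmaxl : w (Fin.last (k + 1)) = x ∨
      ¬∃ a b : V, a ≠ b ∧ G.neighborSet (w (Fin.last (k + 1))) = {a, b}) :
    ∀ i : Fin (k + 2), i ≠ 0 → i ≠ Fin.last (k + 1) → p (w i) = 0 :=
  statement10_general G hG ω hω x p hp hnr hmaxsize k w hnotx hdeg hcut
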